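/- arXiv:2108.13471 — 2 statements merged into one kernel-verified Lean document; each statement's English description precedes it below -/
import Mathlib

section
/- Let a, c be odd natural numbers with a, c ≥ 3, let b be a positive even natural number, and let d be a positive even natural number. If max(v₂(c+1), v₂(c−1)) + v₂(d) ≥ max(v₂(a+1), v₂(a−1)) + 1, then v₂(a^b − c^d) ≥ max(v₂(a+1), v₂(a−1)) + 1 (the difference a^b − c^d being taken in ℤ and assumed nonzero). -/
/-! Lifting the exponent: for odd `x` and even `n ≠ 0`,
`v₂(xⁿ - 1) = v₂(x + 1) + v₂(x - 1) + v₂(n) - 1 ≥ max (v₂(x + 1)) (v₂(x - 1)) + v₂(n)`,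
because both `x + 1` and `x - 1` are even. Under the hypothesis,
`2 ^ (max (v₂(a + 1)) (v₂(a - 1)) + 1)` therefore divides both `aᵇ - 1` and `cᵈ - 1`,
hence their difference `aᵇ - cᵈ`. -/

lemma max_padicValNat_two_add_le_padicValNat_pow_sub_one {x n : ℕ} (hx : Odd x) (hx1 : x ≠ 1)
    (hn : Even n) (hn0 : n ≠ 0) :
    max (padicValNat 2 (x + 1)) (padicValNat 2 (x - 1)) + padicValNat 2 n ≤
      padicValNat 2 (x ^ n - 1) := by
  have hx2 : x % 2 = 1 := Nat.odd_iff.mp hx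
  have hlte := padicValNat.pow_two_sub_pow (x := x) (y := 1)
    (by omega) (by omega) (by omega) hn0 hn
  rw [one_pow] at hlte
  have hplus : 1 ≤ padicValNat 2 (x + 1) := one_le_padicValNat_of_dvd (by omega) (by omega)
  have hminus : 1 ≤ padicValNat 2 (x - 1) := one_le_padicValNat_of_dvd (by omega) (by omega)
  omega

lemma two_pow_dvd_pow_sub_one {x n : ℕ} (hx : Odd x) (hn : Even n) :
    (2 : ℤ) ^ (max (padicValNat 2 (x + 1)) (padicValNat 2 (x - 1)) + padicValNat 2 n) ∣
      (x : ℤ) ^ n - 1 := by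
  rcases eq_or_ne n 0 with rfl | hn0
  · simp
  rcases eq_or_ne x 1 with rfl | hx1
  · simp
  have hdvd : 2 ^ (max (padicValNat 2 (x + 1)) (padicValNat 2 (x - 1)) + padicValNat 2 n) ∣
      x ^ n - 1 :=
    (pow_dvd_pow 2 (max_padicValNat_two_add_le_padicValNat_pow_sub_one hx hx1 hn hn0)).trans
      pow_padicValNat_dvd
  have hpos : 1 ≤ x ^ n := Nat.one_le_pow _ _ hx.pos
  have hcast := Int.natCast_dvd_natCast.mpr hdvd
  push_cast [Nat.cast_sub hpos] at hcast
  exact hcast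

theorem stmt_0_general (a c b d : ℕ) (ha : Odd a) (hc : Odd c)
    (hb : Even b) (hd : Even d)
    (hne : (a : ℤ) ^ b - (c : ℤ) ^ d ≠ 0)
    (h : max (padicValNat 2 (c + 1)) (padicValNat 2 (c - 1)) + padicValNat 2 d ≥
      max (padicValNat 2 (a + 1)) (padicValNat 2 (a - 1)) + 1) :
    padicValInt 2 ((a : ℤ) ^ b - (c : ℤ) ^ d) ≥
      max (padicValNat 2 (a + 1)) (padicValNat 2 (a - 1)) + 1 := by
  set M := max (padicValNat 2 (a + 1)) (padicValNat 2 (a - 1)) + 1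
  have hva : (2 : ℤ) ^ M ∣ (a : ℤ) ^ b - 1 := by
    rcases eq_or_ne b 0 with rfl | hb_ne
    · simp
    have hb1 : 1 ≤ padicValNat 2 b := one_le_padicValNat_of_dvd hb_ne hb.two_dvd
    exact (pow_dvd_pow 2 (by omega)).trans (two_pow_dvd_pow_sub_one ha hb)
  have hvc : (2 : ℤ) ^ M ∣ (c : ℤ) ^ d - 1 :=
    (pow_dvd_pow 2 h).trans (two_pow_dvd_pow_sub_one hc hd)
  have hdiff : ((2 : ℕ) : ℤ) ^ M ∣ (a : ℤ) ^ b - (c : ℤ) ^ d := by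
    simpa using dvd_sub hva hvc
  exact ((padicValInt_dvd_iff M _).mp hdiff).resolve_left hne

theorem stmt_0 (a c b d : ℕ) (ha : Odd a) (hc : Odd c) (ha3 : 3 ≤ a) (hc3 : 3 ≤ c)
    (hb : Even b) (hb0 : 0 < b) (hd : Even d) (hd0 : 0 < d)
    (hne : (a : ℤ) ^ b - (c : ℤ) ^ d ≠ 0)
    (h : max (padicValNat 2 (c + 1)) (padicValNat 2 (c - 1)) + padicValNat 2 d ≥
      max (padicValNat 2 (a + 1)) (padicValNat 2 (a - 1)) + 1) :
    padicValInt 2 ((a : ℤ) ^ b - (c : ℤ) ^ d) ≥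
      max (padicValNat 2 (a + 1)) (padicValNat 2 (a - 1)) + 1 :=
  stmt_0_general a c b d ha hc hb hd hne h
end

section
/- Let a, c be odd natural numbers with a, c ≥ 3, let b be a positive odd natural number, and let d be a positive even natural number. If max(v₂(c+1), v₂(c−1)) + v₂(d) ≥ max(v₂(a+1), v₂(a−1)) + 1, then v₂(a^b − c^d) = min(v₂(a−1), max(v₂(c+1), v₂(c−1)) + v₂(d)) = v₂(a−1) (the difference a^b − c^d being taken in ℤ). -/
/-!
Write `a ^ b - c ^ d = (a ^ b - 1) - (c ^ d - 1)`. Since `b` is odd, the geometric sum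
`1 + a + ⋯ + a ^ (b - 1)` is odd, so `v₂(a ^ b - 1) = v₂(a - 1)`. Since `d` is even, lifting the
exponent gives `v₂(c ^ d - 1) = v₂(c + 1) + v₂(c - 1) + v₂(d) - 1`, and as one of `c ± 1` is
exactly divisible by `2` this is `max (v₂(c + 1)) (v₂(c - 1)) + v₂(d)`. The hypothesis makes this
strictly larger than `v₂(a - 1)`, so the valuation of the difference is `v₂(a - 1)`.
-/

open Finset

lemma padicValInt_pow_sub_one_of_not_dvd {p : ℕ} [Fact p.Prime] {x : ℤ} (hx : (p : ℤ) ∣ x - 1)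
    {n : ℕ} (hn : ¬(p : ℤ) ∣ n) : padicValInt p (x ^ n - 1) = padicValInt p (x - 1) := by
  rcases eq_or_ne x 1 with rfl | hx1
  · simp
  have hp : Prime (p : ℤ) := Nat.prime_iff_prime_int.mp Fact.out
  have hpx : ¬(p : ℤ) ∣ x := fun h => hp.not_dvd_one (by simpa using dvd_sub h hx)
  have hsum : ¬(p : ℤ) ∣ ∑ i ∈ range n, x ^ i := by
    simpa using not_dvd_geom_sum₂ (y := 1) hp (by simpa using hx) hpx hn
  rw [← geom_sum_mul, padicValInt.mul (by rintro h; simp [h] at hsum) (sub_ne_zero.mpr hx1),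
    padicValInt.eq_zero_of_not_dvd hsum, zero_add]

lemma padicValInt_sub_eq_left_of_lt {p : ℕ} [Fact p.Prime] {x y : ℤ} (hx : x ≠ 0)
    (h : padicValInt p x < padicValInt p y) : padicValInt p (x - y) = padicValInt p x := by
  have hy : y ≠ 0 := by rintro rfl; simp at h
  have hxy : (x : ℚ) + -y ≠ 0 := by
    rw [← sub_eq_add_neg, sub_ne_zero, Ne, Int.cast_inj]
    rintro rfl
    exact h.false
  have := padicValRat.add_eq_of_lt (p := p) hxy (by exact_mod_cast hx) (by simpa using hy)
    (by simpa [padicValRat.neg, padicValRat.of_int] using h)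
  rw [← sub_eq_add_neg, ← Int.cast_sub, padicValRat.of_int, padicValRat.of_int] at this
  exact_mod_cast this

lemma min_padicValNat_two_add_one_sub_one {c : ℕ} (hc : Odd c) (h1c : 1 < c) :
    min (padicValNat 2 (c + 1)) (padicValNat 2 (c - 1)) = 1 := by
  have h2 : 2 ∣ c + 1 ∧ 2 ∣ c - 1 := by obtain ⟨k, rfl⟩ := hc; omega
  refine le_antisymm ?_ (le_min (one_le_padicValNat_of_dvd (by omega) h2.1)
    (one_le_padicValNat_of_dvd (by omega) h2.2))
  by_contra! h
  rw [lt_min_iff] at h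
  have h4p := (padicValNat_dvd_iff_le (p := 2) (n := 2) (by omega)).mpr h.1
  have h4m := (padicValNat_dvd_iff_le (p := 2) (n := 2) (by omega)).mpr h.2
  omega

lemma padicValNat_two_pow_sub_one_of_even {c d : ℕ} (hc : Odd c) (h1c : 1 < c) (hd : Even d)
    (hd0 : d ≠ 0) :
    padicValNat 2 (c ^ d - 1) =
      max (padicValNat 2 (c + 1)) (padicValNat 2 (c - 1)) + padicValNat 2 d := by
  have hlte := padicValNat.pow_two_sub_one h1c hc.not_two_dvd_nat hd0 hd
  have := min_add_max (padicValNat 2 (c + 1)) (padicValNat 2 (c - 1))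
  rw [min_padicValNat_two_add_one_sub_one hc h1c] at this
  omega

theorem stmt_1_general (a c b d : ℕ) (ha : Odd a) (hc : Odd c) (ha3 : 3 ≤ a) (hc3 : 3 ≤ c)
    (hb : Odd b) (hd : Even d) (hd0 : 0 < d)
    (h : max (padicValNat 2 (c + 1)) (padicValNat 2 (c - 1)) + padicValNat 2 d ≥
      max (padicValNat 2 (a + 1)) (padicValNat 2 (a - 1)) + 1) :
    padicValInt 2 ((a : ℤ) ^ b - (c : ℤ) ^ d) =
      min (padicValNat 2 (a - 1))
        (max (padicValNat 2 (c + 1)) (padicValNat 2 (c - 1)) + padicValNat 2 d) ∧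
    min (padicValNat 2 (a - 1))
        (max (padicValNat 2 (c + 1)) (padicValNat 2 (c - 1)) + padicValNat 2 d) =
      padicValNat 2 (a - 1) := by
  have hlt : padicValNat 2 (a - 1) <
      max (padicValNat 2 (c + 1)) (padicValNat 2 (c - 1)) + padicValNat 2 d := by
    have := le_max_right (padicValNat 2 (a + 1)) (padicValNat 2 (a - 1))
    omega
  have hva : padicValInt 2 ((a : ℤ) ^ b - 1) = padicValNat 2 (a - 1) := by
    have ha1 : ((a - 1 : ℕ) : ℤ) = a - 1 := by omega
    rw [padicValInt_pow_sub_one_of_not_dvd (((Int.odd_coe_nat a).mpr ha).sub_odd odd_one).two_dvd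
      (by exact_mod_cast hb.not_two_dvd_nat), ← ha1, padicValInt.of_nat]
  have hvc : padicValInt 2 ((c : ℤ) ^ d - 1) =
      max (padicValNat 2 (c + 1)) (padicValNat 2 (c - 1)) + padicValNat 2 d := by
    have hc1 : ((c ^ d - 1 : ℕ) : ℤ) = c ^ d - 1 := by
      rw [Nat.cast_sub (Nat.one_le_pow d c (by omega)), Nat.cast_pow, Nat.cast_one]
    rw [← hc1, padicValInt.of_nat, padicValNat_two_pow_sub_one_of_even hc (by omega) hd (by omega)]
  have hab : (a : ℤ) ^ b - 1 ≠ 0 := by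
    have : (1 : ℤ) < a ^ b := one_lt_pow₀ (by omega) (by rintro rfl; simp at hb)
    omega
  have hdiff : (a : ℤ) ^ b - c ^ d = (a ^ b - 1) - (c ^ d - 1) := by ring
  refine ⟨?_, min_eq_left hlt.le⟩
  rw [hdiff, padicValInt_sub_eq_left_of_lt hab (by rw [hva, hvc]; exact_mod_cast hlt), hva,
    min_eq_left hlt.le]

theorem stmt_1 (a c b d : ℕ) (ha : Odd a) (hc : Odd c) (ha3 : 3 ≤ a) (hc3 : 3 ≤ c)
    (hb : Odd b) (hb0 : 0 < b) (hd : Even d) (hd0 : 0 < d)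
    (h : max (padicValNat 2 (c + 1)) (padicValNat 2 (c - 1)) + padicValNat 2 d ≥
      max (padicValNat 2 (a + 1)) (padicValNat 2 (a - 1)) + 1) :
    padicValInt 2 ((a : ℤ) ^ b - (c : ℤ) ^ d) =
      min (padicValNat 2 (a - 1))
        (max (padicValNat 2 (c + 1)) (padicValNat 2 (c - 1)) + padicValNat 2 d) ∧
    min (padicValNat 2 (a - 1))
        (max (padicValNat 2 (c + 1)) (padicValNat 2 (c - 1)) + padicValNat 2 d) =
      padicValNat 2 (a - 1) :=
  stmt_1_general a c b d ha hc ha3 hc3 hb hd hd0 h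
end
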